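/- arXiv:1607.03958 — 4 statements merged into one kernel-verified Lean document; each statement's English description precedes it below -/
import Mathlib

section
/- Let G be a finite-gain stable system with gain γ > 0, i.e. ∫₀ᵀ y(t)ᵀy(t) dt ≤ γ² ∫₀ᵀ u(t)ᵀu(t) dt for all T. Define the transformed system via u₀ = m₁₁ u + m₁₂ y and y₀ = m₂₁ u + m₂₂ y with real constants satisfying m₁₁ = m₂₁, m₂₂ = −m₁₂, and m₁₁ ≥ m₂₂ γ > 0. Then the transformed system Σ₀: u₀ → y₀ is passive: ∫₀ᵀ u₀(t)ᵀy₀(t) dt ≥ 0 for all T ≥ 0. -/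
/-!
With `m₂₁ = m₁₁` and `m₁₂ = -m₂₂` the supply rate factors as a difference of squares,
`⟪m₁₁ u - m₂₂ y, m₁₁ u + m₂₂ y⟫ = m₁₁² ‖u‖² - m₂₂² ‖y‖²`. Integrating and applying the gain
bound gives `m₂₂² ∫ ‖y‖² ≤ (m₂₂ γ)² ∫ ‖u‖² ≤ m₁₁² ∫ ‖u‖²`.
-/

open MeasureTheory RealInnerProductSpace

section

variable {E : Type*} [NormedAddCommGroup E] [InnerProductSpace ℝ E]

theorem real_inner_sub_add_self (x y : E) : ⟪x - y, x + y⟫ = ‖x‖ ^ 2 - ‖y‖ ^ 2 := by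
  simp only [inner_sub_left, inner_add_right, real_inner_self_eq_norm_sq, real_inner_comm x y]
  ring

theorem real_inner_smul_sub_smul_smul_add_smul (a b : ℝ) (x y : E) :
    ⟪a • x - b • y, a • x + b • y⟫ = a ^ 2 * ‖x‖ ^ 2 - b ^ 2 * ‖y‖ ^ 2 := by
  rw [real_inner_sub_add_self, norm_smul, norm_smul, mul_pow, mul_pow, Real.norm_eq_abs,
    Real.norm_eq_abs, sq_abs, sq_abs]

theorem intervalIntegral.integral_inner_smul_sub_smul_smul_add_smul {μ : Measure ℝ}
    {t₀ T : ℝ} (u y : ℝ → E) (a b : ℝ)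
    (hu : IntervalIntegrable (fun t => ‖u t‖ ^ 2) μ t₀ T)
    (hy : IntervalIntegrable (fun t => ‖y t‖ ^ 2) μ t₀ T) :
    ∫ t in t₀..T, ⟪a • u t - b • y t, a • u t + b • y t⟫ ∂μ
      = a ^ 2 * (∫ t in t₀..T, ‖u t‖ ^ 2 ∂μ) - b ^ 2 * ∫ t in t₀..T, ‖y t‖ ^ 2 ∂μ := by
  simp only [real_inner_smul_sub_smul_smul_add_smul]
  rw [intervalIntegral.integral_sub (hu.const_mul _) (hy.const_mul _),
    intervalIntegral.integral_const_mul, intervalIntegral.integral_const_mul]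

end

theorem sq_mul_le_sq_mul_of_le_sq_mul {a b γ U Y : ℝ} (hU : 0 ≤ U) (hY : Y ≤ γ ^ 2 * U)
    (hbγ : 0 ≤ b * γ) (hbγa : b * γ ≤ a) : b ^ 2 * Y ≤ a ^ 2 * U :=
  calc b ^ 2 * Y ≤ b ^ 2 * (γ ^ 2 * U) := mul_le_mul_of_nonneg_left hY (sq_nonneg b)
    _ = (b * γ) ^ 2 * U := by ring
    _ ≤ a ^ 2 * U := mul_le_mul_of_nonneg_right (pow_le_pow_left₀ hbγ hbγa 2) hU

theorem passivation_passive_general {m : ℕ} (u y : ℝ → EuclideanSpace ℝ (Fin m))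
    (γ m₁₁ m₁₂ m₂₁ m₂₂ : ℝ)
    (hIu : ∀ T : ℝ, IntervalIntegrable (fun t => ‖u t‖ ^ 2) volume 0 T)
    (hIy : ∀ T : ℝ, IntervalIntegrable (fun t => ‖y t‖ ^ 2) volume 0 T)
    (hgain : ∀ T : ℝ, 0 ≤ T →
      (∫ t in (0:ℝ)..T, ‖y t‖ ^ 2) ≤ γ ^ 2 * ∫ t in (0:ℝ)..T, ‖u t‖ ^ 2)
    (h1 : m₁₁ = m₂₁) (h2 : m₂₂ = -m₁₂) (h3 : m₂₂ * γ ≤ m₁₁) (h4 : 0 < m₂₂ * γ) :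
    ∀ T : ℝ, 0 ≤ T →
      0 ≤ ∫ t in (0:ℝ)..T, ⟪m₁₁ • u t + m₁₂ • y t, m₂₁ • u t + m₂₂ • y t⟫ := by
  intro T hT
  obtain rfl : m₁₂ = -m₂₂ := by linarith
  subst h1
  simp only [neg_smul, ← sub_eq_add_neg]
  rw [intervalIntegral.integral_inner_smul_sub_smul_smul_add_smul u y _ _ (hIu T) (hIy T),
    sub_nonneg]
  have hU : 0 ≤ ∫ t in (0:ℝ)..T, ‖u t‖ ^ 2 :=
    intervalIntegral.integral_nonneg hT fun t _ => by positivity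
  exact sq_mul_le_sq_mul_of_le_sq_mul hU (hgain T hT) h4.le h3

/-- passivation by matrix transformation — passive case. -/
theorem passivation_passive {m : ℕ} (u y : ℝ → EuclideanSpace ℝ (Fin m))
    (γ m₁₁ m₁₂ m₂₁ m₂₂ : ℝ) (hγ : 0 < γ)
    (hIu : ∀ T : ℝ, IntervalIntegrable (fun t => ‖u t‖ ^ 2) volume 0 T)
    (hIy : ∀ T : ℝ, IntervalIntegrable (fun t => ‖y t‖ ^ 2) volume 0 T)
    (hIuy : ∀ T : ℝ, IntervalIntegrable (fun t => ⟪u t, y t⟫) volume 0 T)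
    (hgain : ∀ T : ℝ, 0 ≤ T →
      (∫ t in (0:ℝ)..T, ‖y t‖ ^ 2) ≤ γ ^ 2 * ∫ t in (0:ℝ)..T, ‖u t‖ ^ 2)
    (h1 : m₁₁ = m₂₁) (h2 : m₂₂ = -m₁₂) (h3 : m₂₂ * γ ≤ m₁₁) (h4 : 0 < m₂₂ * γ) :
    ∀ T : ℝ, 0 ≤ T →
      0 ≤ ∫ t in (0:ℝ)..T, ⟪m₁₁ • u t + m₁₂ • y t, m₂₁ • u t + m₂₂ • y t⟫ :=
  passivation_passive_general u y γ m₁₁ m₁₂ m₂₁ m₂₂ hIu hIy hgain h1 h2 h3 h4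
end

section
/- Let G be finite-gain stable with gain γ > 0 (∫₀ᵀ |y|² ≤ γ² ∫₀ᵀ |u|² for all T). Define u₀ = m₁₁u + m₁₂y, y₀ = m₂₁u + m₂₂y with m₁₁m₂₂ > m₁₂m₂₁ > 0 and m₂₁ ≥ m₂₂γ > 0. Then Σ₀: u₀ → y₀ is output strictly passive with OFP level ρ₀ = (1/2)(m₁₁/m₂₁ + m₁₂/m₂₂) > 0: ∫₀ᵀ (u₀ᵀy₀ − ρ₀ y₀ᵀy₀) dt ≥ 0 for all T ≥ 0. -/
open MeasureTheory RealInnerProductSpace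

/-!
Expanding the quadratic form, the cross terms `⟪u, y⟫` cancel exactly for the level
`ρ₀ = (m₁₁/m₂₁ + m₁₂/m₂₂)/2`, leaving `u₀ᵀy₀ − ρ₀ y₀ᵀy₀ = c (m₂₁²‖u‖² − m₂₂²‖y‖²)` with
`c = (m₁₁m₂₂ − m₁₂m₂₁)/(2m₂₁m₂₂) > 0`. The finite-gain inequality bounds `m₂₂²∫‖y‖²` by
`(m₂₂γ)²∫‖u‖² ≤ m₂₁²∫‖u‖²`, so the integral of the supply rate is nonnegative.
-/

theorem inner_sub_osp_level_mul_norm_sq_eq {E : Type*} [NormedAddCommGroup E]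
    [InnerProductSpace ℝ E] (x y : E) {m₁₁ m₁₂ m₂₁ m₂₂ : ℝ} (h₂₁ : m₂₁ ≠ 0) (h₂₂ : m₂₂ ≠ 0) :
    ⟪m₁₁ • x + m₁₂ • y, m₂₁ • x + m₂₂ • y⟫ -
        (1/2) * (m₁₁ / m₂₁ + m₁₂ / m₂₂) * ‖m₂₁ • x + m₂₂ • y‖ ^ 2 =
      (m₁₁ * m₂₂ - m₁₂ * m₂₁) / (2 * m₂₁ * m₂₂) *
        (m₂₁ ^ 2 * ‖x‖ ^ 2 - m₂₂ ^ 2 * ‖y‖ ^ 2) := by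
  rw [← real_inner_self_eq_norm_sq, ← real_inner_self_eq_norm_sq, ← real_inner_self_eq_norm_sq]
  simp only [inner_add_left, inner_add_right, real_inner_smul_left, real_inner_smul_right,
    real_inner_comm x y]
  field_simp
  ring

theorem integral_sq_mul_norm_sq_sub_nonneg_of_gain {E : Type*} [NormedAddCommGroup E]
    {u y : ℝ → E} {γ p q T : ℝ} (hT : 0 ≤ T)
    (hu : IntervalIntegrable (fun t => ‖u t‖ ^ 2) volume 0 T)
    (hy : IntervalIntegrable (fun t => ‖y t‖ ^ 2) volume 0 T)
    (hgain : (∫ t in (0:ℝ)..T, ‖y t‖ ^ 2) ≤ γ ^ 2 * ∫ t in (0:ℝ)..T, ‖u t‖ ^ 2)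
    (hpγ : 0 ≤ p * γ) (hq : p * γ ≤ q) :
    0 ≤ ∫ t in (0:ℝ)..T, (q ^ 2 * ‖u t‖ ^ 2 - p ^ 2 * ‖y t‖ ^ 2) := by
  have hu_nonneg : 0 ≤ ∫ t in (0:ℝ)..T, ‖u t‖ ^ 2 :=
    intervalIntegral.integral_nonneg hT fun t _ => by positivity
  have hpq : (p * γ) ^ 2 ≤ q ^ 2 := pow_le_pow_left₀ hpγ hq 2
  rw [intervalIntegral.integral_sub (hu.const_mul _) (hy.const_mul _),
    intervalIntegral.integral_const_mul, intervalIntegral.integral_const_mul, sub_nonneg]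
  calc p ^ 2 * ∫ t in (0:ℝ)..T, ‖y t‖ ^ 2
      ≤ p ^ 2 * (γ ^ 2 * ∫ t in (0:ℝ)..T, ‖u t‖ ^ 2) := by gcongr
    _ = (p * γ) ^ 2 * ∫ t in (0:ℝ)..T, ‖u t‖ ^ 2 := by ring
    _ ≤ q ^ 2 * ∫ t in (0:ℝ)..T, ‖u t‖ ^ 2 := by gcongr

theorem passivation_osp_general {m : ℕ} (u y : ℝ → EuclideanSpace ℝ (Fin m))
    (γ m₁₁ m₁₂ m₂₁ m₂₂ : ℝ) (hγ : 0 < γ)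
    (hIu : ∀ T : ℝ, IntervalIntegrable (fun t => ‖u t‖ ^ 2) volume 0 T)
    (hIy : ∀ T : ℝ, IntervalIntegrable (fun t => ‖y t‖ ^ 2) volume 0 T)
    (hgain : ∀ T : ℝ, 0 ≤ T →
      (∫ t in (0:ℝ)..T, ‖y t‖ ^ 2) ≤ γ ^ 2 * ∫ t in (0:ℝ)..T, ‖u t‖ ^ 2)
    (h1 : m₁₂ * m₂₁ < m₁₁ * m₂₂) (h2 : 0 < m₁₂ * m₂₁)
    (h3 : m₂₂ * γ ≤ m₂₁) (h4 : 0 < m₂₂ * γ) :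
    0 < (1/2) * (m₁₁ / m₂₁ + m₁₂ / m₂₂) ∧
    ∀ T : ℝ, 0 ≤ T →
      0 ≤ ∫ t in (0:ℝ)..T,
        (⟪m₁₁ • u t + m₁₂ • y t, m₂₁ • u t + m₂₂ • y t⟫ -
          (1/2) * (m₁₁ / m₂₁ + m₁₂ / m₂₂) * ‖m₂₁ • u t + m₂₂ • y t‖ ^ 2) := by
  have hm₂₂ : 0 < m₂₂ := pos_of_mul_pos_left h4 hγ.le
  have hm₂₁ : 0 < m₂₁ := h4.trans_le h3
  have hm₁₂ : 0 < m₁₂ := pos_of_mul_pos_left h2 hm₂₁.le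
  have hm₁₁ : 0 < m₁₁ := pos_of_mul_pos_left (h2.trans h1) hm₂₂.le
  refine ⟨by positivity, fun T hT => ?_⟩
  simp_rw [inner_sub_osp_level_mul_norm_sq_eq _ _ hm₂₁.ne' hm₂₂.ne']
  rw [intervalIntegral.integral_const_mul]
  have hD : 0 < m₁₁ * m₂₂ - m₁₂ * m₂₁ := sub_pos.2 h1
  exact mul_nonneg (by positivity) <|
    integral_sq_mul_norm_sq_sub_nonneg_of_gain hT (hIu T) (hIy T) (hgain T hT) h4.le h3

/-- passivation by matrix transformation — OSP case with level
ρ₀ = (1/2)(m₁₁/m₂₁ + m₁₂/m₂₂). -/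
theorem passivation_osp {m : ℕ} (u y : ℝ → EuclideanSpace ℝ (Fin m))
    (γ m₁₁ m₁₂ m₂₁ m₂₂ : ℝ) (hγ : 0 < γ)
    (hIu : ∀ T : ℝ, IntervalIntegrable (fun t => ‖u t‖ ^ 2) volume 0 T)
    (hIy : ∀ T : ℝ, IntervalIntegrable (fun t => ‖y t‖ ^ 2) volume 0 T)
    (hIuy : ∀ T : ℝ, IntervalIntegrable (fun t => ⟪u t, y t⟫) volume 0 T)
    (hgain : ∀ T : ℝ, 0 ≤ T →
      (∫ t in (0:ℝ)..T, ‖y t‖ ^ 2) ≤ γ ^ 2 * ∫ t in (0:ℝ)..T, ‖u t‖ ^ 2)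
    (h1 : m₁₂ * m₂₁ < m₁₁ * m₂₂) (h2 : 0 < m₁₂ * m₂₁)
    (h3 : m₂₂ * γ ≤ m₂₁) (h4 : 0 < m₂₂ * γ) :
    0 < (1/2) * (m₁₁ / m₂₁ + m₁₂ / m₂₂) ∧
    ∀ T : ℝ, 0 ≤ T →
      0 ≤ ∫ t in (0:ℝ)..T,
        (⟪m₁₁ • u t + m₁₂ • y t, m₂₁ • u t + m₂₂ • y t⟫ -
          (1/2) * (m₁₁ / m₂₁ + m₁₂ / m₂₂) * ‖m₂₁ • u t + m₂₂ • y t‖ ^ 2) :=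
  passivation_osp_general u y γ m₁₁ m₁₂ m₂₁ m₂₂ hγ hIu hIy hgain h1 h2 h3 h4
end

section
/- Let G be finite-gain stable with gain γ > 0. Define u₀ = m₁₁u + m₁₂y, y₀ = m₂₁u + m₂₂y with m₁₂m₂₁ > m₁₁m₂₂ > 0 and m₁₁ ≥ m₁₂γ > 0. Then Σ₀: u₀ → y₀ is input strictly passive with IFP level ν₀ = (1/2)(m₂₁/m₁₁ + m₂₂/m₁₂) > 0: ∫₀ᵀ (u₀ᵀy₀ − ν₀ u₀ᵀu₀) dt ≥ 0 for all T ≥ 0. -/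
open MeasureTheory RealInnerProductSpace

/-! With `D = m₁₂ m₂₁ - m₁₁ m₂₂ > 0`, the supply rate of `Σ₀` at the level `ν₀` is pointwise
`(D / 2) (m₁₁/m₁₂ ‖u‖² - m₁₂/m₁₁ ‖y‖²)`; the gain bound `∫ ‖y‖² ≤ γ² ∫ ‖u‖²` makes its integral
nonnegative as soon as `(m₁₂/m₁₁) γ² ≤ m₁₁/m₁₂`, i.e. `m₁₂ γ ≤ m₁₁`. -/

theorem inner_sub_half_mul_norm_sq_eq {E : Type*} [NormedAddCommGroup E] [InnerProductSpace ℝ E]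
    (u y : E) {a b c d : ℝ} (ha : a ≠ 0) (hb : b ≠ 0) :
    ⟪a • u + b • y, c • u + d • y⟫ - (1/2) * (c / a + d / b) * ‖a • u + b • y‖ ^ 2
      = (b * c - a * d) / 2 * (a / b * ‖u‖ ^ 2 - b / a * ‖y‖ ^ 2) := by
  rw [← real_inner_self_eq_norm_sq (a • u + b • y), ← real_inner_self_eq_norm_sq u,
    ← real_inner_self_eq_norm_sq y]
  simp only [inner_add_left, inner_add_right, real_inner_smul_left, real_inner_smul_right,
    real_inner_comm u y]
  field_simp
  ring

theorem intervalIntegral_sub_nonneg_of_le_mul {f g : ℝ → ℝ} {T K c k : ℝ} (hT : 0 ≤ T)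
    (hf : IntervalIntegrable f volume 0 T) (hg : IntervalIntegrable g volume 0 T)
    (hf₀ : ∀ t, 0 ≤ f t) (hgf : ∫ t in (0:ℝ)..T, g t ≤ K * ∫ t in (0:ℝ)..T, f t)
    (hk : 0 ≤ k) (hkK : k * K ≤ c) :
    0 ≤ ∫ t in (0:ℝ)..T, (c * f t - k * g t) := by
  have hf_int : 0 ≤ ∫ t in (0:ℝ)..T, f t :=
    intervalIntegral.integral_nonneg hT fun t _ => hf₀ t
  rw [intervalIntegral.integral_sub (hf.const_mul c) (hg.const_mul k),
    intervalIntegral.integral_const_mul, intervalIntegral.integral_const_mul, sub_nonneg]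
  calc k * ∫ t in (0:ℝ)..T, g t
      ≤ k * (K * ∫ t in (0:ℝ)..T, f t) := mul_le_mul_of_nonneg_left hgf hk
    _ = (k * K) * ∫ t in (0:ℝ)..T, f t := (mul_assoc _ _ _).symm
    _ ≤ c * ∫ t in (0:ℝ)..T, f t := mul_le_mul_of_nonneg_right hkK hf_int

theorem div_mul_sq_le_div_of_mul_le {a b γ : ℝ} (ha : 0 < a) (hb : 0 < b) (hγ : 0 ≤ γ)
    (h : b * γ ≤ a) : b / a * γ ^ 2 ≤ a / b := by
  rw [div_mul_eq_mul_div, div_le_div_iff₀ ha hb]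
  nlinarith [mul_le_mul h h (by positivity) ha.le]

theorem passivation_isp_general {m : ℕ} (u y : ℝ → EuclideanSpace ℝ (Fin m))
    (γ m₁₁ m₁₂ m₂₁ m₂₂ : ℝ) (hγ : 0 < γ)
    (hIu : ∀ T : ℝ, IntervalIntegrable (fun t => ‖u t‖ ^ 2) volume 0 T)
    (hIy : ∀ T : ℝ, IntervalIntegrable (fun t => ‖y t‖ ^ 2) volume 0 T)
    (hgain : ∀ T : ℝ, 0 ≤ T →
      (∫ t in (0:ℝ)..T, ‖y t‖ ^ 2) ≤ γ ^ 2 * ∫ t in (0:ℝ)..T, ‖u t‖ ^ 2)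
    (h1 : m₁₁ * m₂₂ < m₁₂ * m₂₁) (h2 : 0 < m₁₁ * m₂₂)
    (h3 : m₁₂ * γ ≤ m₁₁) (h4 : 0 < m₁₂ * γ) :
    0 < (1/2) * (m₂₁ / m₁₁ + m₂₂ / m₁₂) ∧
    ∀ T : ℝ, 0 ≤ T →
      0 ≤ ∫ t in (0:ℝ)..T,
        (⟪m₁₁ • u t + m₁₂ • y t, m₂₁ • u t + m₂₂ • y t⟫ -
          (1/2) * (m₂₁ / m₁₁ + m₂₂ / m₁₂) * ‖m₁₁ • u t + m₁₂ • y t‖ ^ 2) := by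
  have hm₁₂ : 0 < m₁₂ := pos_of_mul_pos_left h4 hγ.le
  have hm₁₁ : 0 < m₁₁ := h4.trans_le h3
  have hm₂₂ : 0 < m₂₂ := pos_of_mul_pos_right h2 hm₁₁.le
  have hm₂₁ : 0 < m₂₁ := pos_of_mul_pos_right (h2.trans h1) hm₁₂.le
  refine ⟨by positivity, fun T hT => ?_⟩
  simp_rw [inner_sub_half_mul_norm_sq_eq _ _ hm₁₁.ne' hm₁₂.ne', intervalIntegral.integral_const_mul]
  exact mul_nonneg (by linarith) <| intervalIntegral_sub_nonneg_of_le_mul hT (hIu T) (hIy T)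
    (fun t => by positivity) (hgain T hT) (by positivity)
    (div_mul_sq_le_div_of_mul_le hm₁₁ hm₁₂ hγ.le h3)

/-- passivation by matrix transformation — ISP case with level
ν₀ = (1/2)(m₂₁/m₁₁ + m₂₂/m₁₂). -/
theorem passivation_isp {m : ℕ} (u y : ℝ → EuclideanSpace ℝ (Fin m))
    (γ m₁₁ m₁₂ m₂₁ m₂₂ : ℝ) (hγ : 0 < γ)
    (hIu : ∀ T : ℝ, IntervalIntegrable (fun t => ‖u t‖ ^ 2) volume 0 T)
    (hIy : ∀ T : ℝ, IntervalIntegrable (fun t => ‖y t‖ ^ 2) volume 0 T)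
    (hIuy : ∀ T : ℝ, IntervalIntegrable (fun t => ⟪u t, y t⟫) volume 0 T)
    (hgain : ∀ T : ℝ, 0 ≤ T →
      (∫ t in (0:ℝ)..T, ‖y t‖ ^ 2) ≤ γ ^ 2 * ∫ t in (0:ℝ)..T, ‖u t‖ ^ 2)
    (h1 : m₁₁ * m₂₂ < m₁₂ * m₂₁) (h2 : 0 < m₁₁ * m₂₂)
    (h3 : m₁₂ * γ ≤ m₁₁) (h4 : 0 < m₁₂ * γ) :
    0 < (1/2) * (m₂₁ / m₁₁ + m₂₂ / m₁₂) ∧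
    ∀ T : ℝ, 0 ≤ T →
      0 ≤ ∫ t in (0:ℝ)..T,
        (⟪m₁₁ • u t + m₁₂ • y t, m₂₁ • u t + m₂₂ • y t⟫ -
          (1/2) * (m₂₁ / m₁₁ + m₂₂ / m₁₂) * ‖m₁₁ • u t + m₁₂ • y t‖ ^ 2) :=
  passivation_isp_general u y γ m₁₁ m₁₂ m₂₁ m₂₂ hγ hIu hIy hgain h1 h2 h3 h4
end

section
/- Let G be finite-gain stable with gain γ > 0. Fix a ∈ (0,1) and define u₀ = m₁₁u (i.e. m₁₂ = 0), y₀ = m₂₁u + m₂₂y, with m₁₁ > 0 and m₂₁ ≥ m₂₂γ/√(1−a) > 0. Then Σ₀: u₀ → y₀ is very strictly passive with levels δ₀ = (1/2)(m₁₁/m₂₁) and ε₀ = (a/2)(m₂₁/m₁₁): ∫₀ᵀ (u₀ᵀy₀ − δ₀ y₀ᵀy₀ − ε₀ u₀ᵀu₀) dt ≥ 0 for all T ≥ 0. -/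
open MeasureTheory RealInnerProductSpace

/-! With `m₁₂ = 0`, the level `δ₀ = m₁₁ / (2 m₂₁)` is exactly the one for which the cross terms
`⟪u, y⟫` of the supply rate cancel, leaving `m₁₁ / (2 m₂₁) * ((1 - a) m₂₁² ‖u‖² - m₂₂² ‖y‖²)`.
The gain bound turns `∫ ‖y‖²` into `γ² ∫ ‖u‖²`, and `m₂₂ γ ≤ m₂₁ √(1 - a)` makes the result
nonnegative. -/

lemma sq_le_sq_mul_of_div_sqrt_le {x s c : ℝ} (hpos : 0 < x / √s) (h : x / √s ≤ c) :
    x ^ 2 ≤ c ^ 2 * s := by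
  -- `x / √s` vanishes when `s ≤ 0`, so its positivity forces `0 < s`.
  have hs : 0 < s := Real.sqrt_ne_zero'.1 (div_ne_zero_iff.1 hpos.ne').2
  have hsq := pow_le_pow_left₀ hpos.le h 2
  rwa [div_pow, Real.sq_sqrt hs.le, div_le_iff₀ hs] at hsq

lemma passivation_supply_eq {E : Type*} [NormedAddCommGroup E] [InnerProductSpace ℝ E]
    (u y : E) {m₁₁ m₂₁ : ℝ} (m₂₂ a : ℝ) (h₂₁ : m₂₁ ≠ 0) :
    ⟪m₁₁ • u, m₂₁ • u + m₂₂ • y⟫ - (1/2) * (m₁₁ / m₂₁) * ‖m₂₁ • u + m₂₂ • y‖ ^ 2 -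
        (a/2) * (m₂₁ / m₁₁) * ‖m₁₁ • u‖ ^ 2 =
      m₁₁ / (2 * m₂₁) * ((1 - a) * m₂₁ ^ 2 * ‖u‖ ^ 2 - m₂₂ ^ 2 * ‖y‖ ^ 2) := by
  simp only [norm_add_sq_real, norm_smul, inner_add_right, real_inner_smul_left,
    real_inner_smul_right, real_inner_self_eq_norm_sq, Real.norm_eq_abs, mul_pow, sq_abs]
  field_simp
  ring

lemma intervalIntegral_sub_nonneg_of_gain {f g : ℝ → ℝ} {T γ A B : ℝ} (hT : 0 ≤ T)
    (hf : IntervalIntegrable f volume 0 T) (hg : IntervalIntegrable g volume 0 T)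
    (hf₀ : ∀ t, 0 ≤ f t) (hgain : ∫ t in (0:ℝ)..T, g t ≤ γ ^ 2 * ∫ t in (0:ℝ)..T, f t)
    (hB : 0 ≤ B) (hBA : B * γ ^ 2 ≤ A) :
    0 ≤ ∫ t in (0:ℝ)..T, (A * f t - B * g t) := by
  have hF : 0 ≤ ∫ t in (0:ℝ)..T, f t := intervalIntegral.integral_nonneg hT fun t _ => hf₀ t
  rw [intervalIntegral.integral_sub (hf.const_mul A) (hg.const_mul B),
    intervalIntegral.integral_const_mul, intervalIntegral.integral_const_mul, sub_nonneg]
  calc B * ∫ t in (0:ℝ)..T, g t ≤ B * (γ ^ 2 * ∫ t in (0:ℝ)..T, f t) :=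
        mul_le_mul_of_nonneg_left hgain hB
    _ = B * γ ^ 2 * ∫ t in (0:ℝ)..T, f t := by ring
    _ ≤ A * ∫ t in (0:ℝ)..T, f t := mul_le_mul_of_nonneg_right hBA hF

theorem passivation_vsp_general {m : ℕ} (u y : ℝ → EuclideanSpace ℝ (Fin m))
    (γ m₁₁ m₂₁ m₂₂ a : ℝ)
    (hIu : ∀ T : ℝ, IntervalIntegrable (fun t => ‖u t‖ ^ 2) volume 0 T)
    (hIy : ∀ T : ℝ, IntervalIntegrable (fun t => ‖y t‖ ^ 2) volume 0 T)
    (hgain : ∀ T : ℝ, 0 ≤ T →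
      (∫ t in (0:ℝ)..T, ‖y t‖ ^ 2) ≤ γ ^ 2 * ∫ t in (0:ℝ)..T, ‖u t‖ ^ 2)
    (h1 : 0 < m₁₁) (h2 : m₂₂ * γ / Real.sqrt (1 - a) ≤ m₂₁)
    (h3 : 0 < m₂₂ * γ / Real.sqrt (1 - a)) :
    ∀ T : ℝ, 0 ≤ T →
      0 ≤ ∫ t in (0:ℝ)..T,
        (⟪m₁₁ • u t, m₂₁ • u t + m₂₂ • y t⟫ -
          (1/2) * (m₁₁ / m₂₁) * ‖m₂₁ • u t + m₂₂ • y t‖ ^ 2 -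
          (a/2) * (m₂₁ / m₁₁) * ‖m₁₁ • u t‖ ^ 2) := by
  intro T hT
  have hm₂₁ : 0 < m₂₁ := h3.trans_le h2
  have hcoef : m₂₂ ^ 2 * γ ^ 2 ≤ (1 - a) * m₂₁ ^ 2 := by
    linarith [mul_pow m₂₂ γ 2, sq_le_sq_mul_of_div_sqrt_le h3 h2]
  simp_rw [passivation_supply_eq _ _ m₂₂ a hm₂₁.ne', intervalIntegral.integral_const_mul]
  exact mul_nonneg (by positivity) <|
    intervalIntegral_sub_nonneg_of_gain hT (hIu T) (hIy T) (fun _ => sq_nonneg _) (hgain T hT)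
      (sq_nonneg m₂₂) hcoef

/-- passivation by matrix transformation — VSP case with levels
δ₀ = (1/2)(m₁₁/m₂₁) and ε₀ = (a/2)(m₂₁/m₁₁), taking m₁₂ = 0. -/
theorem passivation_vsp {m : ℕ} (u y : ℝ → EuclideanSpace ℝ (Fin m))
    (γ m₁₁ m₂₁ m₂₂ a : ℝ) (hγ : 0 < γ) (ha : 0 < a) (ha' : a < 1)
    (hIu : ∀ T : ℝ, IntervalIntegrable (fun t => ‖u t‖ ^ 2) volume 0 T)
    (hIy : ∀ T : ℝ, IntervalIntegrable (fun t => ‖y t‖ ^ 2) volume 0 T)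
    (hIuy : ∀ T : ℝ, IntervalIntegrable (fun t => ⟪u t, y t⟫) volume 0 T)
    (hgain : ∀ T : ℝ, 0 ≤ T →
      (∫ t in (0:ℝ)..T, ‖y t‖ ^ 2) ≤ γ ^ 2 * ∫ t in (0:ℝ)..T, ‖u t‖ ^ 2)
    (h1 : 0 < m₁₁) (h2 : m₂₂ * γ / Real.sqrt (1 - a) ≤ m₂₁)
    (h3 : 0 < m₂₂ * γ / Real.sqrt (1 - a)) :
    ∀ T : ℝ, 0 ≤ T →
      0 ≤ ∫ t in (0:ℝ)..T,
        (⟪m₁₁ • u t, m₂₁ • u t + m₂₂ • y t⟫ -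
          (1/2) * (m₁₁ / m₂₁) * ‖m₂₁ • u t + m₂₂ • y t‖ ^ 2 -
          (a/2) * (m₂₁ / m₁₁) * ‖m₁₁ • u t‖ ^ 2) :=
  passivation_vsp_general u y γ m₁₁ m₂₁ m₂₂ a hIu hIy hgain h1 h2 h3
end
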